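/- arXiv:1810.11242 — 3 statements merged into one kernel-verified Lean document; each statement's English description precedes it below -/
import Mathlib

section
/- Let m, k ≥ 1 and let G = K_{m,m+k} be the complete bipartite graph with parts A (|A| = m) and B (|B| = m + k). Then every subtree T of G with B ⊆ V(T) has at least k + 1 leaves. -/
open SimpleGraph Set

variable {V : Type*}

/-- The independence number of `S` in `G`: the maximum cardinality of a subset of `S`
that is independent in `G`. -/
noncomputable def indepNumOn (G : SimpleGraph V) (S : Set V) : ℕ :=
  sSup {n | ∃ I : Set V, I ⊆ S ∧ I.Pairwise (fun a b => ¬ G.Adj a b) ∧ I.ncard = n}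

/-- `I` is a maximum independent subset of `S` in `G`. -/
def MaxIndepOn (G : SimpleGraph V) (S : Set V) (I : Set V) : Prop :=
  I ⊆ S ∧ I.Pairwise (fun a b => ¬ G.Adj a b) ∧ I.ncard = indepNumOn G S

/-- Two `x`–`y` walks are internally disjoint if they share only `x` and `y`. -/
def InternallyDisjoint (G : SimpleGraph V) {x y : V} (p q : G.Walk x y) : Prop :=
  ∀ v, v ∈ p.support → v ∈ q.support → v = x ∨ v = y

/-- Local connectivity `κ_G(x,y)`: maximum number of pairwise internally disjoint
`x`–`y` paths in `G`. -/
noncomputable def localConn (G : SimpleGraph V) (x y : V) : ℕ :=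
  sSup {n | ∃ P : Set (G.Path x y),
    P.Pairwise (fun p q => InternallyDisjoint G p.1 q.1) ∧ P.ncard = n}

/-- `κ_G(S)`: the minimum of local connectivities over distinct pairs in `S`,
`+∞` if `S` has at most one element. -/
noncomputable def setConn (G : SimpleGraph V) (S : Set V) : ℕ∞ :=
  ⨅ x ∈ S, ⨅ y ∈ S, ⨅ _ : x ≠ y, (localConn G x y : ℕ∞)

/-- Vertex connectivity `κ(G)`: the maximum `k` such that `G` has more than `k`
vertices and removing fewer than `k` vertices always leaves a connected graph. -/
noncomputable def vertexConn (G : SimpleGraph V) [Fintype V] : ℕ :=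
  sSup {k | k < Fintype.card V ∧ ∀ X : Finset V, X.card < k →
    (G.induce ((↑X : Set V)ᶜ)).Connected}

/-- The set of leaves (vertices of degree one) of a subgraph. -/
def subLeaves {G : SimpleGraph V} (T : G.Subgraph) : Set V :=
  {v | v ∈ T.verts ∧ (T.neighborSet v).ncard = 1}

/-- The set of branch vertices (vertices of degree at least three) of a subgraph. -/
def subBranches {G : SimpleGraph V} (T : G.Subgraph) : Set V :=
  {v | v ∈ T.verts ∧ 3 ≤ (T.neighborSet v).ncard}

/-- In `K_{m,m+k}`, every subtree covering the larger part `B` has at least `k + 1`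
leaves. -/
theorem stmt_7 (m k : ℕ) (hm : 1 ≤ m) (hk : 1 ≤ k)
    (G : SimpleGraph (Fin m ⊕ Fin (m + k)))
    (hG : G = completeBipartiteGraph (Fin m) (Fin (m + k)))
    (T : G.Subgraph) (hT : T.coe.IsTree) (hB : Set.range Sum.inr ⊆ T.verts) :
    k + 1 ≤ (subLeaves T).ncard := by
  show k + 1 ≤ ({v | v ∈ T.verts ∧ (T.neighborSet v).ncard = 1}).ncard
  classical
  subst hG
  set V := Fin m ⊕ Fin (m + k)
  have hBmem : ∀ b : Fin (m + k), (Sum.inr b : V) ∈ T.verts := fun b => hB ⟨b, rfl⟩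
  -- degree as ncard
  have hdn : ∀ v : T.verts, T.coe.degree v = (T.neighborSet v.1).ncard := by
    intro v
    rw [SimpleGraph.Subgraph.coe_degree, SimpleGraph.Subgraph.degree,
      ← Nat.card_eq_fintype_card, Nat.card_coe_set_eq]
  have hb0 : (Sum.inr ⟨0, by omega⟩ : V) ∈ T.verts := hBmem _
  have hb1 : (Sum.inr ⟨1, by omega⟩ : V) ∈ T.verts := hBmem _
  -- every vertex of T has a neighbor
  have hdeg1 : ∀ v ∈ T.verts, 1 ≤ (T.neighborSet v).ncard := by
    intro v hv
    have hne : ∃ w ∈ T.verts, w ≠ v := by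
      by_cases h : v = Sum.inr ⟨0, by omega⟩
      · exact ⟨_, hb1, by simp [h, Fin.ext_iff]⟩
      · exact ⟨_, hb0, fun hc => h hc.symm⟩
    obtain ⟨w, hw, hwv⟩ := hne
    obtain ⟨p⟩ := hT.isConnected.preconnected ⟨v, hv⟩ ⟨w, hw⟩
    rw [Nat.succ_le_iff, Set.ncard_pos (Set.toFinite _)]
    cases p with
    | nil => exact absurd rfl hwv
    | cons h q => exact ⟨_, h⟩
  -- cardinality of T.verts
  have hn2 : 2 ≤ Fintype.card T.verts := by
    rw [← Nat.lt_iff_add_one_le, Fintype.one_lt_card_iff]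
    refine ⟨⟨_, hb0⟩, ⟨_, hb1⟩, ?_⟩
    simp [Subtype.ext_iff, Fin.ext_iff]
  -- handshake
  have hhs : ∑ v : T.verts, T.coe.degree v = 2 * (Fintype.card T.verts - 1) := by
    have h2 : (∑ v : T.verts, T.coe.degree v) = 2 * T.coe.edgeFinset.card := by
      convert SimpleGraph.sum_degrees_eq_twice_card_edges T.coe using 2
      congr!
    have h3 : T.coe.edgeFinset.card + 1 = Fintype.card T.verts := hT.card_edgeFinset
    omega
  -- sum over subtype = sum over all of V
  have hzero : ∀ v : V, v ∉ T.verts → (T.neighborSet v).ncard = 0 := by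
    intro v hv
    rw [Set.ncard_eq_zero (Set.toFinite _)]
    ext w
    simp only [SimpleGraph.Subgraph.mem_neighborSet, Set.mem_empty_iff_false, iff_false]
    intro h
    exact hv (T.edge_vert h)
  have hsum1 : ∑ v : T.verts, T.coe.degree v = ∑ v : V, (T.neighborSet v).ncard := by
    rw [Finset.sum_congr rfl (fun v _ => hdn v),
      Finset.sum_set_coe (f := fun v => (T.neighborSet v).ncard) T.verts]
    exact Finset.sum_subset (Finset.subset_univ _) (fun v _ hv => hzero v (by simpa using hv))
  have htot : (∑ v : V, (T.neighborSet v).ncard) = 2 * (Fintype.card T.verts - 1) :=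
    hsum1.symm.trans hhs
  -- bipartiteness
  have hA : ∀ a : Fin m, (T.neighborSet (Sum.inl a)).ncard
      = ∑ b : Fin (m + k), if T.Adj (Sum.inl a) (Sum.inr b) then 1 else 0 := by
    intro a
    have himg : T.neighborSet (Sum.inl a) = Sum.inr '' {b | T.Adj (Sum.inl a) (Sum.inr b)} := by
      ext w
      cases w with
      | inl w =>
        simp only [SimpleGraph.Subgraph.mem_neighborSet, Set.mem_image, Set.mem_setOf_eq]
        constructor
        · intro h; simpa using T.adj_sub h
        · rintro ⟨b, -, hc⟩; exact absurd hc (by simp)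
      | inr w => simp
    rw [himg, Set.ncard_image_of_injective _ Sum.inr_injective,
      Set.ncard_eq_toFinset_card', Set.toFinset_setOf, Finset.card_filter]
  have hBd : ∀ b : Fin (m + k), (T.neighborSet (Sum.inr b)).ncard
      = ∑ a : Fin m, if T.Adj (Sum.inl a) (Sum.inr b) then 1 else 0 := by
    intro b
    have himg : T.neighborSet (Sum.inr b) = Sum.inl '' {a | T.Adj (Sum.inl a) (Sum.inr b)} := by
      ext w
      cases w with
      | inl w =>
        simp only [SimpleGraph.Subgraph.mem_neighborSet, Set.mem_image, Set.mem_setOf_eq]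
        constructor
        · intro h; exact ⟨w, h.symm, rfl⟩
        · rintro ⟨a, h, hc⟩
          cases Sum.inl_injective hc; exact h.symm
      | inr w =>
        simp only [SimpleGraph.Subgraph.mem_neighborSet, Set.mem_image, Set.mem_setOf_eq]
        constructor
        · intro h; simpa using T.adj_sub h
        · rintro ⟨a, -, hc⟩; exact absurd hc (by simp)
    rw [himg, Set.ncard_image_of_injective _ Sum.inl_injective,
      Set.ncard_eq_toFinset_card', Set.toFinset_setOf, Finset.card_filter]
  have hAB : (∑ a : Fin m, (T.neighborSet (Sum.inl a)).ncard)
      = ∑ b : Fin (m + k), (T.neighborSet (Sum.inr b)).ncard := by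
    simp_rw [hA, hBd]
    exact Finset.sum_comm
  have hsplit : (∑ v : V, (T.neighborSet v).ncard)
      = (∑ a : Fin m, (T.neighborSet (Sum.inl a)).ncard)
        + ∑ b : Fin (m + k), (T.neighborSet (Sum.inr b)).ncard :=
    Fintype.sum_sum_type _
  -- cardinality of the vertex set
  have hverts : T.verts.toFinset =
      ((Finset.univ.filter (fun a : Fin m => (Sum.inl a : V) ∈ T.verts)).image Sum.inl)
        ∪ Finset.univ.image Sum.inr := by
    ext v
    cases v with
    | inl a => simp
    | inr b => simp [hBmem b]
  have hdisj : Disjoint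
      ((Finset.univ.filter (fun a : Fin m => (Sum.inl a : V) ∈ T.verts)).image Sum.inl)
      ((Finset.univ.image Sum.inr : Finset V)) := by
    simp [Finset.disjoint_left]
  have hcardV : Fintype.card T.verts
      = (Finset.univ.filter (fun a : Fin m => (Sum.inl a : V) ∈ T.verts)).card + (m + k) := by
    rw [← Set.toFinset_card, hverts, Finset.card_union_of_disjoint hdisj,
      Finset.card_image_of_injective _ Sum.inl_injective,
      Finset.card_image_of_injective _ Sum.inr_injective]
    simp
  have haCm : (Finset.univ.filter (fun a : Fin m => (Sum.inl a : V) ∈ T.verts)).card ≤ m := by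
    calc (Finset.univ.filter (fun a : Fin m => (Sum.inl a : V) ∈ T.verts)).card
        ≤ (Finset.univ : Finset (Fin m)).card := Finset.card_filter_le _ _
      _ = m := by simp
  -- leaves in B
  have hL2 : 2 * (m + k) ≤ (∑ b : Fin (m + k), (T.neighborSet (Sum.inr b)).ncard)
      + (Finset.univ.filter
          (fun b : Fin (m + k) => (T.neighborSet (Sum.inr b)).ncard = 1)).card := by
    rw [Finset.card_filter, ← Finset.sum_add_distrib]
    calc 2 * (m + k) = ∑ _b : Fin (m + k), 2 := by simp [mul_comm]
      _ ≤ _ := Finset.sum_le_sum (fun b _ => by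
          have h1 := hdeg1 _ (hBmem b)
          by_cases hb : (T.neighborSet (Sum.inr b)).ncard = 1 <;> simp [hb] <;> omega)
  have hLk : k + 1 ≤ (Finset.univ.filter
      (fun b : Fin (m + k) => (T.neighborSet (Sum.inr b)).ncard = 1)).card := by
    omega
  -- conclude
  have hsubL : (((Finset.univ.filter
        (fun b : Fin (m + k) => (T.neighborSet (Sum.inr b)).ncard = 1)).image Sum.inr
          : Finset V) : Set V)
      ⊆ {v | v ∈ T.verts ∧ (T.neighborSet v).ncard = 1} := by
    intro v hv
    simp only [Finset.coe_image, Set.mem_image, Finset.mem_coe, Finset.mem_filter] at hv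
    obtain ⟨b, ⟨-, hb⟩, rfl⟩ := hv
    exact ⟨hBmem b, hb⟩
  calc k + 1 ≤ (Finset.univ.filter
        (fun b : Fin (m + k) => (T.neighborSet (Sum.inr b)).ncard = 1)).card := hLk
    _ = ((Finset.univ.filter
        (fun b : Fin (m + k) => (T.neighborSet (Sum.inr b)).ncard = 1)).image Sum.inr).card :=
      (Finset.card_image_of_injective _ Sum.inr_injective).symm
    _ = (((Finset.univ.filter
        (fun b : Fin (m + k) => (T.neighborSet (Sum.inr b)).ncard = 1)).image Sum.inr
          : Finset V) : Set V).ncard := (Set.ncard_coe_finset _).symm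
    _ ≤ _ := Set.ncard_le_ncard hsubL (Set.toFinite _)
end

section
/- Let G be a connected finite simple graph. If α(G) ≤ κ(G) + 1, then G has a Hamiltonian path. -/
open SimpleGraph Set

variable {V : Type*}

/-!
Take a longest path `v₁ ⋯ vₘ` and suppose a vertex `w` lies off it. Let `H` be the component
of `w` in `G - {v₁, …, vₘ}` and `N` the set of path vertices with a neighbour in `H`. Since `N`
separates `w` from `v₁`, `κ(G) ≤ |N|`. Rerouting the path through `H` would produce a longer
path if `v₁` or `vₘ` were in `N`, if the successor `vᵢ₊₁` of some `vᵢ ∈ N` were in `N` or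
adjacent to `v₁`, or if two such successors were adjacent. Hence `w`, `v₁` and the successors of
the vertices of `N` form an independent set of size `|N| + 2 ≥ κ(G) + 2 > α(G)`.
-/

theorem List.Nodup.eq_of_infix_pair {α : Type*} {l : List α} {a a' b : α} (h : l.Nodup)
    (h₁ : [a, b] <:+: l) (h₂ : [a', b] <:+: l) : a = a' := by
  obtain ⟨A, B, rfl⟩ := h₁
  obtain ⟨A', B', hl⟩ := h₂
  have hsplit : A ++ [a, b] ++ B = (A ++ [a]) ++ b :: B := by simp
  rw [hsplit] at h hl
  have hb := (List.nodup_cons.1 (List.nodup_middle.1 h)).1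
  rw [List.mem_append, not_or] at hb
  have hl' : (A' ++ [a']) ++ b :: B' = (A ++ [a]) ++ b :: B := by simpa using hl
  have := ((List.append_cons_inj_of_notMem hb.1 hb.2).1 hl'.symm).1
  simpa using (List.append_inj' this rfl).2

theorem List.Nodup.head?_ne_of_infix_pair {α : Type*} {l : List α} {a b : α} (h : l.Nodup)
    (hab : [a, b] <:+: l) : l.head? ≠ some b := by
  obtain ⟨A, B, rfl⟩ := hab
  rcases A with _ | ⟨x, A⟩ <;> simp_all

theorem ncard_le_indepNumOn [Finite V] {G : SimpleGraph V} {S I : Set V} (hIS : I ⊆ S)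
    (hI : I.Pairwise fun a b => ¬ G.Adj a b) : I.ncard ≤ indepNumOn G S :=
  le_csSup ⟨Nat.card V, by rintro _ ⟨J, -, -, rfl⟩; exact Set.ncard_le_card J⟩ ⟨I, hIS, hI, rfl⟩

theorem vertexConn_le_card_of_not_connected [Fintype V] [Nonempty V] {G : SimpleGraph V}
    {X : Finset V} (h : ¬ (G.induce (↑X)ᶜ).Connected) : vertexConn G ≤ X.card := by
  by_contra! hlt
  have hmem : vertexConn G ∈ {k | k < Fintype.card V ∧
      ∀ X : Finset V, X.card < k → (G.induce (↑X)ᶜ).Connected} :=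
    Nat.sSup_mem ⟨0, Fintype.card_pos, by simp⟩ ⟨Fintype.card V, fun k hk => hk.1.le⟩
  exact h (hmem.2 X hlt)

namespace SimpleGraph

variable {G : SimpleGraph V}

theorem not_connected_induce_compl {X S : Set V} {u v : V} (hu : u ∈ S) (huX : u ∉ X)
    (hv : v ∉ S) (hvX : v ∉ X) (hS : ∀ x ∈ S, ∀ y, G.Adj x y → y ∈ S ∨ y ∈ X) :
    ¬ (G.induce Xᶜ).Connected := by
  intro hc
  obtain ⟨p⟩ := hc.preconnected ⟨u, huX⟩ ⟨v, hvX⟩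
  obtain ⟨d, -, hd₁, hd₂⟩ := p.exists_boundary_dart (Subtype.val ⁻¹' S) hu hv
  exact (hS _ hd₁ _ d.adj).elim hd₂ d.snd.2

theorem Walk.head?_support {u v : V} (p : G.Walk u v) : p.support.head? = some u := by
  rw [← p.cons_tail_support]
  rfl

theorem Walk.getLast?_support {u v : V} (p : G.Walk u v) : p.support.getLast? = some v := by
  rw [List.getLast?_eq_some_getLast p.support_ne_nil, p.getLast_support]

structure IsPathList (G : SimpleGraph V) (l : List V) : Prop where
  nodup : l.Nodup
  isChain : l.IsChain G.Adj

theorem isPathList_append {l₁ l₂ : List V} :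
    G.IsPathList (l₁ ++ l₂) ↔ G.IsPathList l₁ ∧ G.IsPathList l₂ ∧ l₁.Disjoint l₂ ∧
      ∀ x ∈ l₁.getLast?, ∀ y ∈ l₂.head?, G.Adj x y := by
  constructor
  · rintro ⟨hnd, hch⟩
    rw [List.nodup_append'] at hnd
    rw [List.isChain_append] at hch
    exact ⟨⟨hnd.1, hch.1⟩, ⟨hnd.2.1, hch.2.1⟩, hnd.2.2, hch.2.2⟩
  · rintro ⟨h₁, h₂, hdisj, hadj⟩
    exact ⟨List.nodup_append'.2 ⟨h₁.nodup, h₂.nodup, hdisj⟩, h₁.isChain.append h₂.isChain hadj⟩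

theorem IsPathList.reverse {l : List V} (h : G.IsPathList l) : G.IsPathList l.reverse :=
  ⟨List.nodup_reverse.2 h.nodup, List.isChain_reverse.2 (h.isChain.imp fun _ _ hab => hab.symm)⟩

theorem IsPathList.reverse_append {l₁ l₂ : List V} (h : G.IsPathList (l₁ ++ l₂))
    (hadj : ∀ x ∈ l₁.head?, ∀ y ∈ l₂.head?, G.Adj x y) : G.IsPathList (l₁.reverse ++ l₂) := by
  obtain ⟨h₁, h₂, hdisj, -⟩ := isPathList_append.1 h
  exact isPathList_append.2 ⟨h₁.reverse, h₂, List.disjoint_reverse_left.2 hdisj,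
    by simpa only [List.getLast?_reverse] using hadj⟩

theorem Walk.IsPath.isPathList_support {u v : V} {p : G.Walk u v} (hp : p.IsPath) :
    G.IsPathList p.support :=
  ⟨hp.support_nodup, p.isChain_adj_support⟩

theorem IsPathList.exists_isHamiltonian [DecidableEq V] [Nonempty V] {l : List V}
    (h : G.IsPathList l) (hl : ∀ v, v ∈ l) : ∃ u v, ∃ p : G.Walk u v, p.IsHamiltonian := by
  have hne : l ≠ [] := List.ne_nil_of_mem (hl (Classical.arbitrary V))
  refine ⟨_, _, Walk.ofSupport l hne h.isChain, fun v => ?_⟩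
  rw [Walk.support_ofSupport]
  exact List.count_eq_one_of_mem h.nodup (hl v)

structure IsLongestPathList (G : SimpleGraph V) (L : List V) : Prop extends G.IsPathList L where
  length_le : ∀ l, G.IsPathList l → l.length ≤ L.length

theorem exists_isLongestPathList [Fintype V] (G : SimpleGraph V) : ∃ L, G.IsLongestPathList L := by
  have hne : {k | ∃ l, G.IsPathList l ∧ l.length = k}.Nonempty := ⟨0, [], ⟨by simp, by simp⟩, rfl⟩
  have hbdd : BddAbove {k | ∃ l, G.IsPathList l ∧ l.length = k} :=
    ⟨Fintype.card V, by rintro _ ⟨l, hl, rfl⟩; exact hl.nodup.length_le_card⟩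
  obtain ⟨L, hL, hlen⟩ := Nat.sSup_mem hne hbdd
  exact ⟨L, hL, fun l hl => hlen ▸ le_csSup hbdd ⟨l, hl, rfl⟩⟩

variable {L : List V} {w : V}

def componentAvoiding (G : SimpleGraph V) (L : List V) (w : V) : Set V :=
  {x | ∃ q : G.Walk w x, ∀ y ∈ q.support, y ∉ L}

theorem self_mem_componentAvoiding (hw : w ∉ L) : w ∈ G.componentAvoiding L w :=
  ⟨Walk.nil, by simpa using hw⟩

theorem notMem_of_mem_componentAvoiding {x : V} (hx : x ∈ G.componentAvoiding L w) : x ∉ L :=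
  let ⟨q, hq⟩ := hx
  hq x q.end_mem_support

theorem mem_componentAvoiding_of_adj {x y : V} (hx : x ∈ G.componentAvoiding L w)
    (hxy : G.Adj x y) (hy : y ∉ L) : y ∈ G.componentAvoiding L w := by
  obtain ⟨q, hq⟩ := hx
  refine ⟨q.concat hxy, fun z hz => ?_⟩
  rw [Walk.support_concat, List.mem_append, List.mem_singleton] at hz
  exact hz.elim (hq z) fun h => h ▸ hy

theorem exists_isPath_of_mem_componentAvoiding {x y : V} (hx : x ∈ G.componentAvoiding L w)
    (hy : y ∈ G.componentAvoiding L w) :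
    ∃ r : G.Walk x y, r.IsPath ∧ ∀ z ∈ r.support, z ∉ L := by
  classical
  obtain ⟨q₁, hq₁⟩ := hx
  obtain ⟨q₂, hq₂⟩ := hy
  refine ⟨(q₁.reverse.append q₂).bypass, Walk.bypass_isPath _, fun z hz => ?_⟩
  have hz' := (q₁.reverse.append q₂).support_bypass_subset_support hz
  rw [Walk.mem_support_append_iff, Walk.support_reverse, List.mem_reverse] at hz'
  exact hz'.elim (hq₁ z) (hq₂ z)

open Classical in
noncomputable def contacts (G : SimpleGraph V) (L : List V) (w : V) : Finset V :=
  {t ∈ L.toFinset | ∃ x ∈ G.componentAvoiding L w, G.Adj x t}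

theorem mem_contacts {t : V} :
    t ∈ G.contacts L w ↔ t ∈ L ∧ ∃ x ∈ G.componentAvoiding L w, G.Adj x t := by
  simp [contacts]

open Classical in
noncomputable def contactSuccessors (G : SimpleGraph V) (L : List V) (w : V) : Finset V :=
  {s ∈ L.toFinset | ∃ t ∈ G.contacts L w, [t, s] <:+: L}

theorem mem_contactSuccessors {s : V} :
    s ∈ G.contactSuccessors L w ↔ ∃ t ∈ G.contacts L w, [t, s] <:+: L := by
  simp only [contactSuccessors, Finset.mem_filter, List.mem_toFinset, and_iff_right_iff_imp]
  rintro ⟨t, -, hts⟩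
  exact hts.subset (by simp)

theorem not_adj_of_notMem_contacts (hw : w ∉ L) {v : V} (hv : v ∈ L)
    (hvN : v ∉ G.contacts L w) : ¬ G.Adj w v :=
  fun hwv => hvN (mem_contacts.2 ⟨hv, w, self_mem_componentAvoiding hw, hwv⟩)

/-- Otherwise `A ++ r ++ P.reverse ++ Q` would be a longer path, where `r` is a path through the
component joining a neighbour of the last vertex of `A` to a neighbour of the last vertex of `P`.
All the rerouting arguments are instances of this one. -/
theorem IsLongestPathList.notMem_contacts_of_rotation (hL : G.IsLongestPathList L)
    {A P Q : List V} (hAPQ : A ++ P ++ Q = L) (hA : ∀ a ∈ A.getLast?, a ∈ G.contacts L w)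
    (hPQ : ∀ p ∈ P.head?, ∀ q ∈ Q.head?, G.Adj p q) :
    ∀ t ∈ P.getLast?, t ∉ G.contacts L w := by
  intro t ht htN
  obtain ⟨-, y, hy, hyt⟩ := mem_contacts.1 htN
  obtain ⟨x, hx, hAx⟩ : ∃ x ∈ G.componentAvoiding L w, ∀ a ∈ A.getLast?, G.Adj a x := by
    cases hA' : A.getLast? with
    | none => exact ⟨y, hy, by simp⟩
    | some a =>
      obtain ⟨-, x, hx, hxa⟩ := mem_contacts.1 (hA a hA')
      exact ⟨x, hx, by simpa using hxa.symm⟩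
  obtain ⟨r, hr, hrL⟩ := exists_isPath_of_mem_componentAvoiding hx hy
  obtain ⟨hLpath, hmax⟩ := hL
  subst hAPQ
  rw [List.append_assoc] at hLpath hmax
  obtain ⟨hA, hPQ', hdisj, -⟩ := isPathList_append.1 hLpath
  have hlong : G.IsPathList (A ++ r.support ++ (P.reverse ++ Q)) := by
    refine isPathList_append.2 ⟨isPathList_append.2 ⟨hA, hr.isPathList_support, ?_, ?_⟩,
      hPQ'.reverse_append hPQ, ?_, ?_⟩
    · exact fun z hzA hzr => hrL z hzr (by simp [hzA])
    · simpa [r.head?_support] using hAx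
    · intro z hz hz'
      simp only [List.mem_append, List.mem_reverse] at hz hz'
      rcases hz with hz | hz
      · exact hdisj hz (by simpa using hz')
      · exact hrL z hz (by simp [hz'])
    · rw [List.getLast?_append, r.getLast?_support, List.head?_append, List.head?_reverse,
        Option.mem_def.1 ht]
      simpa using hyt
  have := hmax _ hlong
  simp only [List.length_append, List.length_reverse, Walk.length_support] at this
  omega

theorem IsLongestPathList.head_notMem_contacts (hL : G.IsLongestPathList L) :
    ∀ h ∈ L.head?, h ∉ G.contacts L w := by
  intro h hh
  obtain ⟨T, rfl⟩ := List.head?_eq_some_iff.1 hh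
  exact hL.notMem_contacts_of_rotation (A := []) (P := [h]) (Q := T) rfl (by simp)
    (by simpa using hL.isChain.rel_head?) h rfl

theorem IsLongestPathList.getLast_notMem_contacts (hL : G.IsLongestPathList L) :
    ∀ t ∈ L.getLast?, t ∉ G.contacts L w :=
  hL.notMem_contacts_of_rotation (A := []) (Q := []) (by simp) (by simp) (by simp)

theorem IsLongestPathList.succ_notMem_contacts (hL : G.IsLongestPathList L) {t s : V}
    (hts : [t, s] <:+: L) (ht : t ∈ G.contacts L w) : s ∉ G.contacts L w := by
  obtain ⟨A, B, rfl⟩ := hts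
  have hAPQ : (A ++ [t]) ++ [s] ++ B = A ++ [t, s] ++ B := by simp
  refine hL.notMem_contacts_of_rotation hAPQ (by simpa using ht) ?_ s (by simp)
  have hLpath := hL.toIsPathList
  rw [← hAPQ] at hLpath
  simpa using (isPathList_append.1 hLpath).2.2.2

theorem IsLongestPathList.not_adj_head_succ (hL : G.IsLongestPathList L) {t s : V}
    (hts : [t, s] <:+: L) (ht : t ∈ G.contacts L w) : ∀ h ∈ L.head?, ¬ G.Adj h s := by
  intro h hh hhs
  obtain ⟨A, B, rfl⟩ := hts
  have hAPQ : [] ++ (A ++ [t]) ++ s :: B = A ++ [t, s] ++ B := by simp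
  refine hL.notMem_contacts_of_rotation hAPQ (by simp) (fun p hp q hq => ?_) t (by simp) ht
  rw [← hAPQ, List.nil_append, List.head?_append_of_ne_nil _ (by simp)] at hh
  obtain rfl : p = h := Option.some_injective _ (hp.symm.trans hh)
  obtain rfl : q = s := Option.some_injective _ hq.symm
  exact hhs

theorem IsLongestPathList.not_adj_succ_succ (hL : G.IsLongestPathList L) {t₁ s₁ t₂ s₂ : V}
    (h₁ : [t₁, s₁] <:+: L) (h₂ : [t₂, s₂] <:+: L) (ht₁ : t₁ ∈ G.contacts L w)
    (ht₂ : t₂ ∈ G.contacts L w) (hs : s₁ ≠ s₂) : ¬ G.Adj s₁ s₂ := by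
  obtain ⟨A₁, B₁, e₁⟩ := h₁
  obtain ⟨A₂, B₂, e₂⟩ := h₂
  wlog hle : A₁.length ≤ A₂.length generalizing t₁ s₁ t₂ s₂ A₁ B₁ A₂ B₂
  · exact fun h => this ht₂ ht₁ hs.symm A₂ B₂ e₂ A₁ B₁ e₁ (by omega) h.symm
  intro hadj
  have e : A₁ ++ t₁ :: s₁ :: B₁ = A₂ ++ t₂ :: s₂ :: B₂ := by simpa using e₁.trans e₂.symm
  obtain ⟨C, rfl, hC⟩ : ∃ C, A₂ = A₁ ++ C ∧ t₁ :: s₁ :: B₁ = C ++ t₂ :: s₂ :: B₂ := by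
    rcases List.append_eq_append_iff.1 e with h | ⟨C, rfl, hC⟩
    · exact h
    · obtain rfl : C = [] := by simpa using hle
      exact ⟨[], by simp, by simpa using hC.symm⟩
  rcases C with _ | ⟨x, M⟩
  · simp only [List.nil_append, List.cons.injEq] at hC
    exact hs hC.2.1
  obtain ⟨rfl, hM⟩ := List.cons_eq_cons.1 hC
  have hAPQ : (A₁ ++ [t₁]) ++ (M ++ [t₂]) ++ s₂ :: B₂ = L := by simpa using e₂
  refine hL.notMem_contacts_of_rotation hAPQ (by simpa using ht₁) ?_ t₂ (by simp) ht₂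
  rcases M with _ | ⟨m, M⟩ <;> simp_all

theorem IsLongestPathList.card_contacts_le_card_contactSuccessors
    (hL : G.IsLongestPathList L) : (G.contacts L w).card ≤ (G.contactSuccessors L w).card := by
  refine Finset.card_le_card_of_forall_subsingleton (fun t s => [t, s] <:+: L) (fun t ht => ?_)
    fun s _ t₁ ht₁ t₂ ht₂ => hL.nodup.eq_of_infix_pair ht₁.2 ht₂.2
  obtain ⟨A, B, rfl⟩ := List.append_of_mem (mem_contacts.1 ht).1
  rcases B with _ | ⟨s, B⟩
  · exact absurd ht (hL.getLast_notMem_contacts t (by simp))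
  · have hts : [t, s] <:+: A ++ t :: s :: B := ⟨A, B, by simp⟩
    exact ⟨s, mem_contactSuccessors.2 ⟨t, ht, hts⟩, hts⟩

theorem IsLongestPathList.vertexConn_le_card_contacts [Fintype V] (hL : G.IsLongestPathList L)
    (hw : w ∉ L) {h : V} (hh : h ∈ L.head?) : vertexConn G ≤ (G.contacts L w).card := by
  have : Nonempty V := ⟨w⟩
  refine vertexConn_le_card_of_not_connected (not_connected_induce_compl
    (S := G.componentAvoiding L w) (self_mem_componentAvoiding hw)
    (fun hwN => hw (mem_contacts.1 hwN).1)
    (fun hhC => notMem_of_mem_componentAvoiding hhC (List.mem_of_mem_head? hh))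
    (hL.head_notMem_contacts h hh) fun x hx y hxy => ?_)
  by_cases hy : y ∈ L
  · exact Or.inr (mem_contacts.2 ⟨hy, x, hx, hxy⟩)
  · exact Or.inl (mem_componentAvoiding_of_adj hx hxy hy)

theorem IsLongestPathList.pairwise_not_adj_insert_contactSuccessors
    (hL : G.IsLongestPathList L) (hw : w ∉ L) {h : V} (hh : h ∈ L.head?) :
    (insert w (insert h (G.contactSuccessors L w : Set V))).Pairwise fun a b => ¬ G.Adj a b := by
  have hsucc : ∀ s ∈ G.contactSuccessors L w, ∃ t ∈ G.contacts L w, [t, s] <:+: L :=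
    fun s hs => mem_contactSuccessors.1 hs
  simp only [Set.pairwise_insert, Set.mem_insert_iff, Finset.mem_coe]
  refine ⟨⟨fun s₁ hs₁ s₂ hs₂ hs => ?_, fun s hs _ => ?_⟩, fun v hv _ => ?_⟩
  · obtain ⟨t₁, ht₁, h₁⟩ := hsucc s₁ hs₁
    obtain ⟨t₂, ht₂, h₂⟩ := hsucc s₂ hs₂
    exact hL.not_adj_succ_succ h₁ h₂ ht₁ ht₂ hs
  · obtain ⟨t, ht, hts⟩ := hsucc s hs
    exact ⟨hL.not_adj_head_succ hts ht h hh, fun hsh => hL.not_adj_head_succ hts ht h hh hsh.symm⟩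
  · have hvL : v ∈ L ∧ v ∉ G.contacts L w := by
      rcases hv with rfl | hv
      · exact ⟨List.mem_of_mem_head? hh, hL.head_notMem_contacts v hh⟩
      · obtain ⟨t, ht, hts⟩ := hsucc v hv
        exact ⟨hts.subset (by simp), hL.succ_notMem_contacts hts ht⟩
    have hwv := not_adj_of_notMem_contacts hw hvL.1 hvL.2
    exact ⟨hwv, fun hvw => hwv hvw.symm⟩

theorem IsLongestPathList.mem [Fintype V] (hακ : indepNumOn G Set.univ ≤ vertexConn G + 1)
    (hL : G.IsLongestPathList L) (w : V) : w ∈ L := by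
  by_contra hw
  obtain ⟨h, hh⟩ : ∃ h, h ∈ L.head? := by
    cases L with
    | nil => simpa using hL.length_le [w] ⟨by simp, by simp⟩
    | cons h _ => exact ⟨h, rfl⟩
  have hS : ∀ s ∈ G.contactSuccessors L w, ∃ t ∈ G.contacts L w, [t, s] <:+: L :=
    fun s hs => mem_contactSuccessors.1 hs
  have hwS : w ∉ insert h (G.contactSuccessors L w : Set V) := by
    rintro (rfl | hwS)
    · exact hw (List.mem_of_mem_head? hh)
    · obtain ⟨t, -, hts⟩ := hS w hwS
      exact hw (hts.subset (by simp))
  have hhS : h ∉ (G.contactSuccessors L w : Set V) := fun hhS =>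
    let ⟨_, _, hts⟩ := hS h hhS
    hL.nodup.head?_ne_of_infix_pair hts hh
  have hα := ncard_le_indepNumOn (Set.subset_univ _)
    (hL.pairwise_not_adj_insert_contactSuccessors hw hh)
  rw [Set.ncard_insert_of_notMem hwS, Set.ncard_insert_of_notMem hhS, Set.ncard_coe_finset] at hα
  have hκ := hL.vertexConn_le_card_contacts hw hh
  have hN := hL.card_contacts_le_card_contactSuccessors (w := w)
  omega

end SimpleGraph

/-- Chvátal–Erdős: if `G` is connected and `α(G) ≤ κ(G) + 1`, then `G` has a
Hamiltonian path. -/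
theorem stmt_9 [Fintype V] [DecidableEq V] (G : SimpleGraph V) (hG : G.Connected)
    (hακ : indepNumOn G Set.univ ≤ vertexConn G + 1) :
    ∃ (u v : V) (p : G.Walk u v), p.IsHamiltonian := by
  have := hG.nonempty
  obtain ⟨L, hL⟩ := G.exists_isLongestPathList
  exact hL.toIsPathList.exists_isHamiltonian (hL.mem hακ)
end

section
/- Let G be a connected finite simple graph with at least 3 vertices. If α(G) ≤ κ(G), then G has a Hamiltonian cycle. -/
open SimpleGraph Set

variable {V : Type*}

/-!
Take a longest cycle `c` (one exists: either `G` is complete, or two non-adjacent vertices force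
`κ(G) ≥ α(G) ≥ 2`) and suppose a vertex `v` is not on it. Let `H` be the component of `v` in
`G - c` and `N` the vertices of `c` adjacent to `H`. The successor on `c` of a vertex of `N` is
never adjacent to `H`, since otherwise a detour through `H` would lengthen `c`; so `N` separates
`v` from that successor and `|N| ≥ κ(G)`. For the same reason the successors of the vertices of
`N` are pairwise non-adjacent (a chord between two of them gives a Hamiltonian path of `c` that
again closes through `H`), so together with `v` they form an independent set of size
`|N| + 1 > κ(G) ≥ α(G)`.
-/

section Connectivity

variable {G : SimpleGraph V} {S : Set V} {a b : V}

lemma ncard_le_indepNumOn_univ [Finite V] {I : Set V} (hI : I.Pairwise fun a b => ¬G.Adj a b) :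
    I.ncard ≤ indepNumOn G univ := by
  refine le_csSup ⟨Nat.card V, ?_⟩ ⟨I, subset_univ I, hI, rfl⟩
  rintro n ⟨J, -, -, rfl⟩
  exact J.ncard_le_card

lemma exists_walk_of_connected_induce (hS : (G.induce S).Connected) (ha : a ∈ S) (hb : b ∈ S) :
    ∃ w : G.Walk a b, ∀ t ∈ w.support, t ∈ S := by
  obtain ⟨w⟩ := hS.preconnected ⟨a, ha⟩ ⟨b, hb⟩
  have hw : ∀ t ∈ (w.map (Embedding.induce S).toHom).support, t ∈ S := by
    simp only [Walk.support_map, List.mem_map]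
    rintro _ ⟨t, -, rfl⟩
    exact t.2
  exact ⟨_, hw⟩

lemma exists_walk_avoiding_of_ncard_lt_vertexConn [Fintype V] {X : Set V}
    (hX : X.ncard < vertexConn G) (ha : a ∉ X) (hb : b ∉ X) :
    ∃ w : G.Walk a b, ∀ t ∈ w.support, t ∉ X := by
  have hmem : vertexConn G ∈ {k | k < Fintype.card V ∧ ∀ X : Finset V, X.card < k →
      (G.induce ((↑X : Set V)ᶜ)).Connected} :=
    Nat.sSup_mem ⟨0, Fintype.card_pos_iff.mpr ⟨a⟩, fun _ h => absurd h (Nat.not_lt_zero _)⟩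
      ⟨Fintype.card V, fun _ hk => hk.1.le⟩
  have hconn := hmem.2 X.toFinite.toFinset (by rwa [← ncard_eq_toFinset_card X])
  rw [Finite.coe_toFinset] at hconn
  exact exists_walk_of_connected_induce hconn ha hb

end Connectivity

namespace SimpleGraph

variable {G : SimpleGraph V} {a b x : V}

lemma exists_isCycle_of_walk_not_mem_edges (hab : G.Adj a b) (p : G.Walk a b)
    (hp : s(a, b) ∉ p.edges) : ∃ (u : V) (c : G.Walk u u), c.IsCycle := by
  obtain ⟨u, c, hc, -⟩ := adj_and_reachable_delete_edges_iff_exists_cycle.mp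
    ⟨hab, reachable_deleteEdges_iff_exists_walk.mpr ⟨p, hp⟩⟩
  exact ⟨u, c, hc⟩

lemma exists_third_vertex [Fintype V] [DecidableEq V] (hcard : 3 ≤ Fintype.card V) (a b : V) :
    ∃ z, z ≠ a ∧ z ≠ b := by
  obtain ⟨z, hz⟩ : (({a, b} : Finset V)ᶜ).Nonempty := by
    rw [← Finset.card_pos, Finset.card_compl]
    have := Finset.card_le_two (a := a) (b := b)
    omega
  exact ⟨z, by simpa [not_or] using hz⟩

lemma exists_isCycle_of_two_le_vertexConn [Fintype V] [DecidableEq V]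
    (hcard : 3 ≤ Fintype.card V) (hκ : 2 ≤ vertexConn G) (hax : G.Adj a x) :
    ∃ (u : V) (c : G.Walk u u), c.IsCycle := by
  obtain ⟨z, hza, hzx⟩ := exists_third_vertex hcard a x
  obtain ⟨p, hp⟩ := exists_walk_avoiding_of_ncard_lt_vertexConn (G := G) (X := {x}) (a := a)
    (b := z) (by simp; omega) (by simpa using hax.ne) (by simpa using hzx)
  obtain ⟨q, hq⟩ := exists_walk_avoiding_of_ncard_lt_vertexConn (G := G) (X := {a}) (a := z)
    (b := x) (by simp; omega) (by simpa using hza) (by simpa using hax.ne')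
  refine exists_isCycle_of_walk_not_mem_edges hax (p.append q) fun he => ?_
  rcases List.mem_append.mp (Walk.edges_append p q ▸ he) with he | he
  · exact hp x (p.snd_mem_support_of_mem_edges he) rfl
  · exact hq a (q.fst_mem_support_of_mem_edges he) rfl

lemma exists_isCycle_of_indepNumOn_le_vertexConn [Fintype V] [DecidableEq V] (hG : G.Connected)
    (hcard : 3 ≤ Fintype.card V) (hακ : indepNumOn G univ ≤ vertexConn G) :
    ∃ (u : V) (c : G.Walk u u), c.IsCycle := by
  by_cases hpair : ∃ a b : V, a ≠ b ∧ ¬G.Adj a b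
  · obtain ⟨a, b, hab, hnadj⟩ := hpair
    have hκ : 2 ≤ vertexConn G := by
      have hI : ({a, b} : Set V).Pairwise fun a b => ¬G.Adj a b :=
        pairwise_pair.mpr fun _ => ⟨hnadj, fun h => hnadj h.symm⟩
      have := ncard_le_indepNumOn_univ hI
      rw [ncard_pair hab] at this
      omega
    obtain ⟨w⟩ := hG.preconnected a b
    obtain ⟨x, hax, -, -⟩ := Walk.not_nil_iff.mp (Walk.not_nil_of_ne (p := w) hab)
    exact exists_isCycle_of_two_le_vertexConn hcard hκ hax
  · simp only [not_exists, not_and, not_not] at hpair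
    obtain ⟨a, b, hab⟩ := Fintype.exists_pair_of_one_lt_card (α := V) (by omega)
    obtain ⟨z, hza, hzb⟩ := exists_third_vertex hcard a b
    refine exists_isCycle_of_walk_not_mem_edges (hpair a b hab)
      (.cons (hpair a z hza.symm) (.cons (hpair z b hzb) .nil)) ?_
    simp [hab, hza.symm, hzb.symm]

namespace Walk

variable {c : G.Walk x x} {y y₁ y₂ : V}

structure IsLongestCycle (c : G.Walk x x) : Prop where
  isCycle : c.IsCycle
  length_le : ∀ (u : V) (d : G.Walk u u), d.IsCycle → d.length ≤ c.length

lemma exists_isLongestCycle [Fintype V] (h : ∃ (u : V) (c : G.Walk u u), c.IsCycle) :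
    ∃ (u : V) (c : G.Walk u u), c.IsLongestCycle := by
  let L : Set ℕ := {n | ∃ (u : V) (c : G.Walk u u), c.IsCycle ∧ c.length = n}
  have hbdd : BddAbove L := by
    refine ⟨Fintype.card V, ?_⟩
    rintro _ ⟨u, c, hc, rfl⟩
    have := hc.isPath_tail.length_lt
    have := c.length_tail_add_one hc.not_nil
    omega
  obtain ⟨u, c, hc⟩ := h
  have hne : L.Nonempty := ⟨c.length, u, c, hc, rfl⟩
  obtain ⟨u, c, hc, hlen⟩ := Nat.sSup_mem hne hbdd
  exact ⟨u, c, hc, fun v d hd => hlen ▸ le_csSup hbdd ⟨v, d, hd, rfl⟩⟩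

lemma IsCycle.isHamiltonianCycle_of_forall_mem_support [DecidableEq V] (hc : c.IsCycle)
    (hall : ∀ v, v ∈ c.support) : c.IsHamiltonianCycle := by
  refine ⟨hc, hc.isPath_tail.isHamiltonian_of_mem fun v => ?_⟩
  rw [support_tail_of_not_nil c hc.not_nil]
  rcases (c.mem_support_iff).mp (hall v) with rfl | hv
  · exact c.end_mem_tail_support hc.not_nil
  · exact hv

lemma IsLongestCycle.length_add_one_le_of_isPath (hc : c.IsLongestCycle) {r : G.Walk a b}
    (hr : r.IsPath) (hba : G.Adj b a) : r.length + 1 ≤ c.length := by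
  by_cases hr1 : r.length = 1
  · have := hc.isCycle.three_le_length
    omega
  have hcyc : (cons hba r).IsCycle := (cons_isCycle_iff r hba).mpr
    ⟨hr, fun he => hr1 (hr.length_eq_one_of_mem_edges (Sym2.eq_swap ▸ he))⟩
  simpa using hc.length_le b _ hcyc

open Classical in
/-- Well defined when `c` is a cycle; the value `y` off `c` is junk. -/
noncomputable def cycleSucc (c : G.Walk x x) (y : V) : V :=
  if h : ∃ d ∈ c.darts, d.fst = y then h.choose.snd else y

lemma IsCycle.dart_eq_of_fst_eq (hc : c.IsCycle) {d₁ d₂ : G.Dart} (h₁ : d₁ ∈ c.darts)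
    (h₂ : d₂ ∈ c.darts) (h : d₁.fst = d₂.fst) : d₁ = d₂ :=
  List.inj_on_of_nodup_map (c.map_fst_darts ▸ hc.nodup_dropLast_support) h₁ h₂ h

lemma IsCycle.dart_eq_of_snd_eq (hc : c.IsCycle) {d₁ d₂ : G.Dart} (h₁ : d₁ ∈ c.darts)
    (h₂ : d₂ ∈ c.darts) (h : d₁.snd = d₂.snd) : d₁ = d₂ :=
  List.inj_on_of_nodup_map (c.map_snd_darts ▸ hc.support_nodup) h₁ h₂ h

lemma IsCycle.cycleSucc_fst (hc : c.IsCycle) {d : G.Dart} (hd : d ∈ c.darts) :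
    c.cycleSucc d.fst = d.snd := by
  have h : ∃ d' ∈ c.darts, d'.fst = d.fst := ⟨d, hd, rfl⟩
  rw [cycleSucc, dif_pos h, hc.dart_eq_of_fst_eq h.choose_spec.1 hd h.choose_spec.2]

lemma IsCycle.rotate_eq_cons_cycleSucc [DecidableEq V] (hc : c.IsCycle) (hy : y ∈ c.support) :
    ∃ (h : G.Adj y (c.cycleSucc y)) (q : G.Walk (c.cycleSucc y) y), c.rotate y hy = cons h q := by
  obtain ⟨z, h, q, hrot⟩ := not_nil_iff.mp (hc.rotate hy).not_nil
  have hd : (⟨(y, z), h⟩ : G.Dart) ∈ c.darts :=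
    (c.rotate_darts y hy).perm.mem_iff.mp (by simp [hrot])
  obtain rfl : c.cycleSucc y = z := hc.cycleSucc_fst hd
  exact ⟨h, q, hrot⟩

lemma IsCycle.cycleSucc_mem [DecidableEq V] (hc : c.IsCycle) (hy : y ∈ c.support) :
    c.cycleSucc y ∈ c.support := by
  obtain ⟨_, _, hrot⟩ := hc.rotate_eq_cons_cycleSucc hy
  rw [← c.mem_support_rotate_iff y hy, hrot]
  simp

lemma IsCycle.injOn_cycleSucc [DecidableEq V] (hc : c.IsCycle) :
    InjOn c.cycleSucc {y | y ∈ c.support} := by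
  have hdart : ∀ {y} (hy : y ∈ c.support), ∃ h : G.Adj y (c.cycleSucc y),
      (⟨(y, c.cycleSucc y), h⟩ : G.Dart) ∈ c.darts := fun hy => by
    obtain ⟨h, _, hrot⟩ := hc.rotate_eq_cons_cycleSucc hy
    exact ⟨h, (c.rotate_darts _ hy).perm.mem_iff.mp (by simp [hrot])⟩
  intro y₁ hy₁ y₂ hy₂ heq
  obtain ⟨h₁, hd₁⟩ := hdart hy₁
  obtain ⟨h₂, hd₂⟩ := hdart hy₂
  simpa using congrArg (·.fst) (hc.dart_eq_of_snd_eq hd₁ hd₂ heq)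

lemma IsCycle.exists_isPath_cycleSucc [DecidableEq V] (hc : c.IsCycle) (hy : y ∈ c.support) :
    ∃ q : G.Walk (c.cycleSucc y) y,
      q.IsPath ∧ q.support ⊆ c.support ∧ q.length + 1 = c.length := by
  obtain ⟨h, q, hrot⟩ := hc.rotate_eq_cons_cycleSucc hy
  obtain ⟨hq, -⟩ := (cons_isCycle_iff _ _).mp (hrot ▸ hc.rotate hy)
  refine ⟨q, hq, fun t ht => ?_, ?_⟩
  · rw [← c.mem_support_rotate_iff y hy, hrot]
    exact List.mem_cons_of_mem _ ht
  · simpa [hrot] using c.length_rotate y hy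

/-- Go backwards along `c` from `y₂` to `cycleSucc y₁`, cross the chord, then forwards from
`cycleSucc y₂` to `y₁`. -/
lemma IsCycle.exists_isPath_of_adj_cycleSucc [DecidableEq V] (hc : c.IsCycle)
    (hy₁ : y₁ ∈ c.support) (hy₂ : y₂ ∈ c.support) (hne : y₂ ≠ y₁)
    (hadj : G.Adj (c.cycleSucc y₁) (c.cycleSucc y₂)) :
    ∃ W : G.Walk y₂ y₁, W.IsPath ∧ W.support ⊆ c.support ∧ W.length + 1 = c.length := by
  obtain ⟨h, q, hrot⟩ := hc.rotate_eq_cons_cycleSucc hy₁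
  have hq : q.support ⊆ c.support := fun t ht => by
    rw [← c.mem_support_rotate_iff y₁ hy₁, hrot]
    exact List.mem_cons_of_mem _ ht
  obtain ⟨hqpath, -⟩ := (cons_isCycle_iff _ _).mp (hrot ▸ hc.rotate hy₁)
  have hy₂q : y₂ ∈ q.support := by
    rw [← c.mem_support_rotate_iff y₁ hy₁, hrot, support_cons] at hy₂
    exact (List.mem_cons.mp hy₂).resolve_left hne
  obtain ⟨t, r, rfl⟩ := q.mem_support_iff_exists_append.mp hy₂q
  cases r with
  | nil => exact absurd rfl hne
  | cons h₂ r =>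
  have hz : c.cycleSucc y₂ = _ := hc.cycleSucc_fst (d := ⟨(y₂, _), h₂⟩)
    ((c.rotate_darts y₁ hy₁).perm.mem_iff.mp (by simp [hrot]))
  subst hz
  have hperm : List.Perm (t.reverse.append (cons hadj r)).support
      (t.append (cons h₂ r)).support := by
    simp only [support_append, support_reverse, support_cons, List.tail_cons]
    exact (List.reverse_perm _).append_right _
  refine ⟨t.reverse.append (cons hadj r), ?_, fun v hv => hq (hperm.subset hv), ?_⟩
  · exact IsPath.mk' (hperm.nodup_iff.mpr hqpath.support_nodup)
  · simpa [hrot] using c.length_rotate y₁ hy₁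

end Walk

section Outside

variable {S : Set V} {v h h₁ h₂ : V}

def componentOutside (G : SimpleGraph V) (S : Set V) (v : V) : Set V :=
  {h | ∃ w : G.Walk v h, ∀ t ∈ w.support, t ∉ S}

def attachments (G : SimpleGraph V) (S : Set V) (v : V) : Set V :=
  {t | t ∈ S ∧ ∃ h ∈ G.componentOutside S v, G.Adj h t}

lemma self_mem_componentOutside (hv : v ∉ S) : v ∈ G.componentOutside S v :=
  ⟨.nil, by simpa using hv⟩

lemma notMem_of_mem_componentOutside (hh : h ∈ G.componentOutside S v) : h ∉ S := by
  obtain ⟨w, hw⟩ := hh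
  exact hw h w.end_mem_support

lemma mem_componentOutside_of_adj (ha : a ∈ G.componentOutside S v) (hab : G.Adj a b)
    (hb : b ∉ S) : b ∈ G.componentOutside S v := by
  obtain ⟨w, hw⟩ := ha
  refine ⟨w.concat hab, fun t ht => ?_⟩
  rw [Walk.support_concat, List.mem_append, List.mem_singleton] at ht
  rcases ht with ht | rfl
  · exact hw t ht
  · exact hb

lemma exists_isPath_of_mem_componentOutside [DecidableEq V]
    (hh₁ : h₁ ∈ G.componentOutside S v) (hh₂ : h₂ ∈ G.componentOutside S v) :
    ∃ p : G.Walk h₁ h₂, p.IsPath ∧ ∀ t ∈ p.support, t ∉ S := by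
  obtain ⟨w₁, hw₁⟩ := hh₁
  obtain ⟨w₂, hw₂⟩ := hh₂
  refine ⟨(w₁.reverse.append w₂).bypass, Walk.bypass_isPath _, fun t ht => ?_⟩
  rcases (Walk.mem_support_append_iff _ _).mp (Walk.support_bypass_subset_support _ ht)
    with ht | ht
  · exact hw₁ t (by simpa using ht)
  · exact hw₂ t ht

lemma Walk.exists_mem_support_mem_attachments {y : V} (w : G.Walk a y)
    (ha : a ∈ G.componentOutside S v) (hy : y ∈ S) :
    ∃ t ∈ w.support, t ∈ G.attachments S v := by
  induction w with
  | nil => exact absurd hy (notMem_of_mem_componentOutside ha)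
  | @cons a b y hab w ih =>
    by_cases hb : b ∈ S
    · exact ⟨b, by simp, hb, a, ha, hab⟩
    · obtain ⟨t, ht, htN⟩ := ih (mem_componentOutside_of_adj ha hab hb) hy
      exact ⟨t, by simp [ht], htN⟩

lemma vertexConn_le_ncard_attachments [Fintype V] {y : V} (hv : v ∉ S) (hy : y ∈ S)
    (hyN : y ∉ G.attachments S v) : vertexConn G ≤ (G.attachments S v).ncard := by
  by_contra! hlt
  obtain ⟨w, hw⟩ := exists_walk_avoiding_of_ncard_lt_vertexConn hlt (fun h => hv h.1) hyN
  obtain ⟨t, ht, htN⟩ := w.exists_mem_support_mem_attachments (self_mem_componentOutside hv) hy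
  exact hw t ht htN

end Outside

namespace Walk

variable [DecidableEq V] {c : G.Walk x x} {v y h h₁ h₂ t t₁ t₂ : V}

/-- Joining `h₂ ~ y'` and `y ~ h₁` through the component of `v` outside `c` would close a cycle
longer than `c`. -/
lemma IsLongestCycle.not_adj_of_isPath (hc : c.IsLongestCycle) {y' : V} {W : G.Walk y' y}
    (hW : W.IsPath) (hWc : W.support ⊆ c.support) (hlen : W.length + 1 = c.length)
    (hh₁ : h₁ ∈ G.componentOutside {t | t ∈ c.support} v)
    (hh₂ : h₂ ∈ G.componentOutside {t | t ∈ c.support} v) (hadj₁ : G.Adj h₁ y) :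
    ¬G.Adj h₂ y' := by
  intro hadj₂
  obtain ⟨p, hp, hpc⟩ := exists_isPath_of_mem_componentOutside hh₁ hh₂
  have hr : (p.append (cons hadj₂ W)).IsPath := by
    refine IsPath.mk' ?_
    rw [support_append, support_cons, List.tail_cons, List.nodup_append]
    exact ⟨hp.support_nodup, hW.support_nodup,
      fun a ha b hb hab => hpc a ha (hab ▸ hWc hb)⟩
  have := hc.length_add_one_le_of_isPath hr hadj₁.symm
  simp only [length_append, length_cons] at this
  omega

lemma IsLongestCycle.not_adj_cycleSucc (hc : c.IsLongestCycle)
    (ht : t ∈ G.attachments {t | t ∈ c.support} v)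
    (hh : h ∈ G.componentOutside {t | t ∈ c.support} v) : ¬G.Adj h (c.cycleSucc t) := by
  obtain ⟨htc, h₁, hh₁, hadj₁⟩ := ht
  obtain ⟨q, hq, hqc, hlen⟩ := hc.isCycle.exists_isPath_cycleSucc htc
  exact hc.not_adj_of_isPath hq hqc hlen hh₁ hh hadj₁

lemma IsLongestCycle.cycleSucc_notMem_attachments (hc : c.IsLongestCycle)
    (ht : t ∈ G.attachments {t | t ∈ c.support} v) :
    c.cycleSucc t ∉ G.attachments {t | t ∈ c.support} v :=
  fun ⟨_, _, hh, hadj⟩ => hc.not_adj_cycleSucc ht hh hadj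

lemma IsLongestCycle.not_adj_cycleSucc_cycleSucc (hc : c.IsLongestCycle)
    (ht₁ : t₁ ∈ G.attachments {t | t ∈ c.support} v)
    (ht₂ : t₂ ∈ G.attachments {t | t ∈ c.support} v) (hne : t₁ ≠ t₂) :
    ¬G.Adj (c.cycleSucc t₁) (c.cycleSucc t₂) := by
  intro hadj
  obtain ⟨W, hW, hWc, hlen⟩ :=
    hc.isCycle.exists_isPath_of_adj_cycleSucc ht₁.1 ht₂.1 hne.symm hadj
  obtain ⟨-, h₁, hh₁, hadj₁⟩ := ht₁
  obtain ⟨-, h₂, hh₂, hadj₂⟩ := ht₂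
  exact hc.not_adj_of_isPath hW hWc hlen hh₁ hh₂ hadj₁ hadj₂

lemma IsLongestCycle.pairwise_not_adj_insert_image_cycleSucc (hc : c.IsLongestCycle)
    (hv : v ∉ c.support) :
    (insert v (c.cycleSucc '' G.attachments {t | t ∈ c.support} v)).Pairwise
      fun a b => ¬G.Adj a b := by
  have hvH := self_mem_componentOutside (G := G) (S := {t | t ∈ c.support}) hv
  refine pairwise_insert.mpr ⟨?_, ?_⟩
  · rintro _ ⟨t₁, ht₁, rfl⟩ _ ⟨t₂, ht₂, rfl⟩ hne
    exact hc.not_adj_cycleSucc_cycleSucc ht₁ ht₂ fun h => hne (h ▸ rfl)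
  · rintro _ ⟨t, ht, rfl⟩ -
    exact ⟨hc.not_adj_cycleSucc ht hvH, fun h => hc.not_adj_cycleSucc ht hvH h.symm⟩

lemma IsCycle.ncard_insert_image_cycleSucc [Finite V] (hc : c.IsCycle) {N : Set V}
    (hN : N ⊆ {t | t ∈ c.support}) (hv : v ∉ c.support) :
    (insert v (c.cycleSucc '' N)).ncard = N.ncard + 1 := by
  rw [ncard_insert_of_notMem, (hc.injOn_cycleSucc.mono hN).ncard_image]
  rintro ⟨t, ht, rfl⟩
  exact hv (hc.cycleSucc_mem (hN ht))

end Walk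

end SimpleGraph

/-- Chvátal–Erdős: if `G` is connected, has at least 3 vertices and `α(G) ≤ κ(G)`,
then `G` has a Hamiltonian cycle. -/
theorem stmt_10 [Fintype V] [DecidableEq V] (G : SimpleGraph V) (hG : G.Connected)
    (hcard : 3 ≤ Fintype.card V)
    (hακ : indepNumOn G Set.univ ≤ vertexConn G) :
    ∃ (u : V) (c : G.Walk u u), c.IsHamiltonianCycle := by
  obtain ⟨x, c, hc⟩ :=
    Walk.exists_isLongestCycle (exists_isCycle_of_indepNumOn_le_vertexConn hG hcard hακ)
  refine ⟨x, c, hc.isCycle.isHamiltonianCycle_of_forall_mem_support fun v => ?_⟩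
  by_contra hv
  replace hv : v ∉ {t | t ∈ c.support} := hv
  obtain ⟨w⟩ := hG.preconnected v x
  obtain ⟨t, -, ht⟩ :=
    w.exists_mem_support_mem_attachments (self_mem_componentOutside hv) c.start_mem_support
  have hκ := vertexConn_le_ncard_attachments hv (hc.isCycle.cycleSucc_mem ht.1)
    (hc.cycleSucc_notMem_attachments ht)
  have hα := ncard_le_indepNumOn_univ (hc.pairwise_not_adj_insert_image_cycleSucc hv)
  rw [hc.isCycle.ncard_insert_image_cycleSucc (fun _ h => h.1) hv] at hα
  omega
end
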